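/- arXiv:2508.17256 — 3 statements merged into one kernel-verified Lean document; each statement's English description precedes it below -/
import Mathlib

section
/- Let M be a nonzero real n × n matrix with singular values σ₁, …, σᵣ (listed with multiplicity, all nonnegative, not all zero), and let p i = σ i / (∑ j, σ j). Then the effective rank erank(M) = exp(−∑ i, p i * log (p i)) satisfies erank(M) ≥ (∑ i, σ i)^2 / (∑ i, (σ i)^2), i.e. erank(M) ≥ ‖M‖_*^2 / ‖M‖_F^2, where ‖M‖_* = ∑ i, σ i is the nuclear (trace) norm and ‖M‖_F^2 = ∑ i, (σ i)^2 is the squared Frobenius norm. -/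
open scoped BigOperators

/-- The singular values of a real square matrix `M`, listed with multiplicity:
the square roots of the eigenvalues of the positive-semidefinite matrix `Mᵀ * M`. -/
noncomputable def singularValues {n : ℕ} (M : Matrix (Fin n) (Fin n) ℝ) : Fin n → ℝ :=
  fun i => Real.sqrt ((Matrix.isHermitian_conjTranspose_mul_self M).eigenvalues i)

/-- The nuclear (trace) norm of a real square matrix: the sum of its singular values. -/
noncomputable def nuclearNorm {n : ℕ} (M : Matrix (Fin n) (Fin n) ℝ) : ℝ :=
  ∑ i, singularValues M i

/-- The Frobenius norm of a real square matrix. -/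
noncomputable def frobeniusNorm {n : ℕ} (M : Matrix (Fin n) (Fin n) ℝ) : ℝ :=
  Real.sqrt (∑ i, ∑ j, (M i j) ^ 2)

/-- The operator (spectral) norm of a real square matrix: its largest singular value. -/
noncomputable def opNorm {n : ℕ} (M : Matrix (Fin n) (Fin n) ℝ) : ℝ :=
  ⨆ i, singularValues M i

/-- The effective rank of a real square matrix: `exp` of the Shannon entropy of the
distribution obtained by normalizing the singular values.
(In Lean, `Real.log 0 = 0`, so the convention `0 * log 0 = 0` holds automatically.) -/
noncomputable def erank {n : ℕ} (M : Matrix (Fin n) (Fin n) ℝ) : ℝ :=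
  Real.exp (-∑ i, (singularValues M i / ∑ j, singularValues M j) *
      Real.log (singularValues M i / ∑ j, singularValues M j))

/-! Jensen's inequality for the convex function `exp`, applied to the values `log pᵢ` with
weights `pᵢ`, gives `exp (∑ pᵢ log pᵢ) ≤ ∑ pᵢ²`: the Shannon entropy dominates the collision
(Rényi-2) entropy. For the normalized singular values, `1 / ∑ pᵢ² = ‖M‖_*² / ‖M‖_F²`. -/

open Real Finset

lemma inv_sum_sq_le_exp_entropy {ι : Type*} [Fintype ι] (p : ι → ℝ) (hp : ∀ i, 0 ≤ p i)
    (hp1 : ∑ i, p i = 1) :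
    (∑ i, p i ^ 2)⁻¹ ≤ exp (-∑ i, p i * log (p i)) := by
  have jensen : exp (∑ i, p i * log (p i)) ≤ ∑ i, p i * exp (log (p i)) := by
    simpa only [smul_eq_mul] using
      convexOn_exp.map_sum_le (fun i _ => hp i) hp1 (fun i _ => Set.mem_univ (log (p i)))
  -- `exp (log 0) = 1`, but that term carries the weight `0`.
  have weighted_exp_log : ∑ i, p i * exp (log (p i)) = ∑ i, p i ^ 2 := by
    refine sum_congr rfl fun i _ => ?_
    rcases (hp i).eq_or_lt with h0 | hpos
    · simp [← h0]
    · rw [exp_log hpos, sq]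
  rw [exp_neg]
  exact inv_anti₀ (exp_pos _) (weighted_exp_log ▸ jensen)

lemma sq_sum_div_sum_sq_le_exp_entropy {ι : Type*} [Fintype ι] (σ : ι → ℝ)
    (hσ : ∀ i, 0 ≤ σ i) :
    (∑ i, σ i) ^ 2 / ∑ i, σ i ^ 2 ≤
      exp (-∑ i, (σ i / ∑ j, σ j) * log (σ i / ∑ j, σ j)) := by
  set S := ∑ j, σ j
  rcases (show 0 ≤ S from sum_nonneg fun i _ => hσ i).eq_or_lt with hS | hS
  · rw [← hS, zero_pow two_ne_zero, zero_div]
    exact (exp_pos _).le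
  have normalized_sum : ∑ i, σ i / S = 1 := by rw [← sum_div, div_self hS.ne']
  have normalized_sum_sq : ∑ i, (σ i / S) ^ 2 = (∑ i, σ i ^ 2) / S ^ 2 := by
    simp only [div_pow, ← sum_div]
  calc (∑ i, σ i) ^ 2 / ∑ i, σ i ^ 2 = (∑ i, (σ i / S) ^ 2)⁻¹ := by
        rw [normalized_sum_sq, inv_div]
    _ ≤ _ := inv_sum_sq_le_exp_entropy _ (fun i => div_nonneg (hσ i) hS.le) normalized_sum

theorem erank_ge_sq_nuclear_div_sq_frobenius_general {n : ℕ} (M : Matrix (Fin n) (Fin n) ℝ) :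
    erank M ≥ (∑ i, singularValues M i) ^ 2 / (∑ i, (singularValues M i) ^ 2) :=
  sq_sum_div_sum_sq_le_exp_entropy _ fun _ => sqrt_nonneg _

/-- **Effective rank dominates the squared nuclear-to-Frobenius norm ratio.**
For a nonzero real `n × n` matrix `M` with singular values `σ i`,
`erank M ≥ (∑ i, σ i)^2 / (∑ i, (σ i)^2) = ‖M‖_*^2 / ‖M‖_F^2`. -/
theorem erank_ge_sq_nuclear_div_sq_frobenius {n : ℕ} (M : Matrix (Fin n) (Fin n) ℝ)
    (hM : M ≠ 0) :
    erank M ≥ (∑ i, singularValues M i) ^ 2 / (∑ i, (singularValues M i) ^ 2) :=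
  erank_ge_sq_nuclear_div_sq_frobenius_general M
end

section
/- Let A be a nonzero real n × n row-stochastic matrix (A i j ≥ 0 and each row sums to 1) with effective rank erank(A) ≤ R for some R > 0. Then the nuclear norm satisfies ‖A‖_* ≤ √(R * n). -/
/-!
Shannon entropy dominates collision (Rényi-2) entropy, so with `p i = σ i / ∑ σ` one gets
`erank A ≥ 1 / ∑ p i ^ 2 = ‖A‖_*² / ‖A‖_F²`. The entries of a row-stochastic matrix lie in
`[0, 1]`, hence `‖A‖_F² = ∑ A i j ^ 2 ≤ ∑ A i j = n`, and `‖A‖_*² ≤ erank A * n ≤ R * n`.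
-/

open scoped BigOperators

open Matrix Real Finset

theorem sum_sq_singularValues {n : ℕ} (M : Matrix (Fin n) (Fin n) ℝ) :
    ∑ i, singularValues M i ^ 2 = ∑ i, ∑ j, M i j ^ 2 := by
  have hM := isHermitian_conjTranspose_mul_self M
  calc ∑ i, singularValues M i ^ 2 = ∑ i, hM.eigenvalues i :=
        sum_congr rfl fun i _ => sq_sqrt ((posSemidef_conjTranspose_mul_self M).eigenvalues_nonneg i)
    _ = (Mᴴ * M).trace := by
        rw [hM.trace_eq_sum_eigenvalues]
        rfl
    _ = ∑ i, ∑ j, M i j ^ 2 := by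
        simp only [trace, Matrix.diag, mul_apply, conjTranspose_apply, star_trivial, sq]
        exact sum_comm

theorem sum_sq_le_card_of_mem_rowStochastic {ι : Type*} [Fintype ι] [DecidableEq ι]
    {M : Matrix ι ι ℝ} (hM : M ∈ rowStochastic ℝ ι) :
    ∑ i, ∑ j, M i j ^ 2 ≤ Fintype.card ι :=
  calc ∑ i, ∑ j, M i j ^ 2 ≤ ∑ i : ι, ∑ j, M i j :=
        sum_le_sum fun i _ => sum_le_sum fun j _ => by
          rw [sq]
          exact mul_le_of_le_one_right (nonneg_of_mem_rowStochastic hM)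
            (le_one_of_mem_rowStochastic hM)
    _ = Fintype.card ι := by simp [sum_row_of_mem_rowStochastic hM]

theorem sum_sq_pos_of_sum_ne_zero {ι : Type*} [Fintype ι] {f : ι → ℝ} (h : ∑ i, f i ≠ 0) :
    0 < ∑ i, f i ^ 2 := by
  obtain ⟨i, -, hi⟩ := exists_ne_zero_of_sum_ne_zero h
  exact sum_pos' (fun j _ => sq_nonneg (f j)) ⟨i, mem_univ i, by positivity⟩

theorem inv_sum_sq_le_exp_neg_sum_mul_log {ι : Type*} [Fintype ι] {p : ι → ℝ}
    (hp : ∀ i, 0 ≤ p i) (hsum : ∑ i, p i = 1) :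
    (∑ i, p i ^ 2)⁻¹ ≤ exp (-∑ i, p i * log (p i)) := by
  set Q := ∑ i, p i ^ 2
  have hQ : 0 < Q := sum_sq_pos_of_sum_ne_zero (hsum ▸ one_ne_zero)
  -- `log y ≤ y - 1` at `y = p i / Q`
  have hterm : ∀ i, p i * log (p i) ≤ p i * log Q + p i * (p i / Q - 1) := by
    intro i
    rcases (hp i).eq_or_lt with h | h
    · simp [← h]
    · have := mul_le_mul_of_nonneg_left (log_le_sub_one_of_pos (div_pos h hQ)) h.le
      rw [log_div h.ne' hQ.ne', mul_sub] at this
      linarith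
  have hentropy : ∑ i, p i * log (p i) ≤ log Q :=
    calc ∑ i, p i * log (p i) ≤ ∑ i, (p i * log Q + p i * (p i / Q - 1)) :=
          sum_le_sum fun i _ => hterm i
      _ = log Q := by
          simp only [sum_add_distrib, ← sum_mul, hsum, mul_sub, mul_one, sum_sub_distrib,
            ← mul_div_assoc, ← sum_div, ← sq]
          rw [div_self hQ.ne']
          ring
  rw [← exp_log (inv_pos.2 hQ), log_inv]
  exact exp_le_exp.2 (neg_le_neg hentropy)

theorem sq_sum_le_exp_entropy_mul_sum_sq {ι : Type*} [Fintype ι] {σ : ι → ℝ}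
    (hσ : ∀ i, 0 ≤ σ i) :
    (∑ i, σ i) ^ 2 ≤
      exp (-∑ i, (σ i / ∑ j, σ j) * log (σ i / ∑ j, σ j)) * ∑ i, σ i ^ 2 := by
  set S := ∑ i, σ i
  have hS0 : 0 ≤ S := sum_nonneg fun i _ => hσ i
  rcases hS0.eq_or_lt with hS | hS
  · rw [← hS, zero_pow two_ne_zero]
    positivity
  have hp : ∑ i, σ i / S = 1 := by rw [← sum_div, div_self hS.ne']
  have hpsq : ∑ i, (σ i / S) ^ 2 = (∑ i, σ i ^ 2) / S ^ 2 := by simp only [div_pow, ← sum_div]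
  have key := inv_sum_sq_le_exp_neg_sum_mul_log (fun i => div_nonneg (hσ i) hS.le) hp
  rwa [hpsq, inv_div, div_le_iff₀ (sum_sq_pos_of_sum_ne_zero hS.ne')] at key

theorem nuclearNorm_sq_le_erank_mul_sum_sq {n : ℕ} (M : Matrix (Fin n) (Fin n) ℝ) :
    nuclearNorm M ^ 2 ≤ erank M * ∑ i, ∑ j, M i j ^ 2 := by
  rw [← sum_sq_singularValues]
  exact sq_sum_le_exp_entropy_mul_sum_sq fun i => sqrt_nonneg _

theorem nuclearNorm_le_sqrt_erank_mul_dim_general {n : ℕ}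
    (A : Matrix (Fin n) (Fin n) ℝ)
    (hpos : ∀ i j, 0 ≤ A i j) (hrow : ∀ i, ∑ j, A i j = 1)
    (R : ℝ) (herank : erank A ≤ R) :
    nuclearNorm A ≤ Real.sqrt (R * n) := by
  have hA : A ∈ rowStochastic ℝ (Fin n) := mem_rowStochastic_iff_sum.2 ⟨hpos, hrow⟩
  have hR : 0 ≤ R := (exp_pos _).le.trans herank
  refine le_sqrt_of_sq_le ?_
  calc nuclearNorm A ^ 2 ≤ erank A * ∑ i, ∑ j, A i j ^ 2 := nuclearNorm_sq_le_erank_mul_sum_sq A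
    _ ≤ R * n := by
        gcongr
        simpa using sum_sq_le_card_of_mem_rowStochastic hA

/-- **Nuclear-norm bound for row-stochastic matrices of bounded effective rank.**
If `A` is a nonzero real `n × n` row-stochastic matrix with `erank A ≤ R`, `R > 0`,
then `‖A‖_* ≤ √(R * n)`. -/
theorem nuclearNorm_le_sqrt_erank_mul_dim {n : ℕ}
    (A : Matrix (Fin n) (Fin n) ℝ) (hA : A ≠ 0)
    (hpos : ∀ i j, 0 ≤ A i j) (hrow : ∀ i, ∑ j, A i j = 1)
    (R : ℝ) (hR : 0 < R) (herank : erank A ≤ R) :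
    nuclearNorm A ≤ Real.sqrt (R * n) :=
  nuclearNorm_le_sqrt_erank_mul_dim_general A hpos hrow R herank
end

section
/- The softmax map on ℝⁿ, defined by softmax(x) i = exp(x i) / (∑ j, exp(x j)), is 1-Lipschitz with respect to the Euclidean norm: for all x, y ∈ ℝⁿ, ‖softmax(x) − softmax(y)‖₂ ≤ ‖x − y‖₂. -/
open scoped BigOperators

/-- The softmax map on `ℝⁿ`: `softmax x i = exp (x i) / ∑ j, exp (x j)`. -/
noncomputable def softmax {n : ℕ} (x : Fin n → ℝ) : Fin n → ℝ :=
  fun i => Real.exp (x i) / ∑ j, Real.exp (x j)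

/-!
Writing `softmax x i = exp (x i - log ∑ j, exp (x j))` and using that the gradient of
log-sum-exp is softmax, the Jacobian of softmax at `x` is `diag p - p pᵀ` with `p = softmax x`,
i.e. `(J v) i = p i * (v i - ⟪p, v⟫)`. As `0 ≤ p i ≤ 1`, `‖J v‖² ≤ ∑ i, p i * (v i - ⟪p, v⟫)²`,
the variance of `v` under `p`, which is at most `∑ i, p i * v i ^ 2 ≤ ‖v‖²`. So `‖J‖ ≤ 1`
everywhere, and the mean value inequality makes softmax 1-Lipschitz.
-/

open Finset Matrix WithLp

section WeightedVariance

variable {ι : Type*} [Fintype ι]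

theorem sum_mul_sub_dotProduct_sq {p : ι → ℝ} (hp : ∑ i, p i = 1) (v : ι → ℝ) :
    ∑ i, p i * (v i - p ⬝ᵥ v) ^ 2 = ∑ i, p i * v i ^ 2 - (p ⬝ᵥ v) ^ 2 := by
  have hexpand : ∀ i, p i * (v i - p ⬝ᵥ v) ^ 2 =
      p i * v i ^ 2 - 2 * (p ⬝ᵥ v) * (p i * v i) + (p ⬝ᵥ v) ^ 2 * p i := fun i => by ring
  rw [sum_congr rfl fun i _ => hexpand i, sum_add_distrib, sum_sub_distrib, ← mul_sum, ← mul_sum,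
    hp]
  simp only [dotProduct]
  ring

theorem sum_sq_mul_sub_dotProduct_le {p : ι → ℝ} (hp0 : ∀ i, 0 ≤ p i) (hp1 : ∀ i, p i ≤ 1)
    (hp : ∑ i, p i = 1) (v : ι → ℝ) :
    ∑ i, (p i * (v i - p ⬝ᵥ v)) ^ 2 ≤ ∑ i, v i ^ 2 :=
  calc ∑ i, (p i * (v i - p ⬝ᵥ v)) ^ 2
      ≤ ∑ i, p i * (v i - p ⬝ᵥ v) ^ 2 := by
        gcongr with i
        rw [mul_pow, sq (p i), mul_assoc]
        exact mul_le_of_le_one_left (mul_nonneg (hp0 i) (sq_nonneg _)) (hp1 i)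
    _ = ∑ i, p i * v i ^ 2 - (p ⬝ᵥ v) ^ 2 := sum_mul_sub_dotProduct_sq hp v
    _ ≤ ∑ i, p i * v i ^ 2 := sub_le_self _ (sq_nonneg _)
    _ ≤ ∑ i, v i ^ 2 := by
        gcongr with i
        exact mul_le_of_le_one_left (sq_nonneg _) (hp1 i)

end WeightedVariance

def softmaxJacobian {ι : Type*} [DecidableEq ι] (p : ι → ℝ) : Matrix ι ι ℝ :=
  diagonal p - vecMulVec p p

theorem softmaxJacobian_mulVec {ι : Type*} [Fintype ι] [DecidableEq ι] (p v : ι → ℝ) (i : ι) :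
    (softmaxJacobian p *ᵥ v) i = p i * (v i - p ⬝ᵥ v) := by
  simp only [softmaxJacobian, sub_mulVec, vecMulVec_mulVec, op_smul_eq_smul, Pi.sub_apply,
    mulVec_diagonal, Pi.smul_apply, smul_eq_mul]
  ring

section Softmax

variable {n : ℕ}

theorem sum_exp_pos [NeZero n] (x : Fin n → ℝ) : 0 < ∑ j, Real.exp (x j) :=
  sum_pos (fun _ _ => Real.exp_pos _) univ_nonempty

theorem softmax_pos (x : Fin n → ℝ) (i : Fin n) : 0 < softmax x i :=
  div_pos (Real.exp_pos _) (sum_pos (fun _ _ => Real.exp_pos _) ⟨i, mem_univ i⟩)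

theorem softmax_le_one (x : Fin n → ℝ) (i : Fin n) : softmax x i ≤ 1 :=
  div_le_one_of_le₀ (single_le_sum (fun j _ => (Real.exp_pos (x j)).le) (mem_univ i))
    (sum_nonneg fun _ _ => (Real.exp_pos _).le)

theorem sum_softmax [NeZero n] (x : Fin n → ℝ) : ∑ i, softmax x i = 1 := by
  simp only [softmax, ← sum_div]
  exact div_self (sum_exp_pos x).ne'

theorem softmax_eq_exp_sub_log [NeZero n] (x : Fin n → ℝ) (i : Fin n) :
    softmax x i = Real.exp (x i - Real.log (∑ j, Real.exp (x j))) := by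
  rw [Real.exp_sub, Real.exp_log (sum_exp_pos x), softmax]

theorem hasFDerivAt_logSumExp [NeZero n] (z : EuclideanSpace ℝ (Fin n)) :
    HasFDerivAt (fun z : EuclideanSpace ℝ (Fin n) => Real.log (∑ j, Real.exp (z j)))
      (∑ j, softmax (ofLp z) j • EuclideanSpace.proj (𝕜 := ℝ) j) z := by
  have h := (HasFDerivAt.fun_sum fun j _ => (PiLp.hasFDerivAt_apply 2 z j).exp).log
    (sum_exp_pos (ofLp z)).ne'
  refine h.congr_fderiv ?_
  simp only [softmax, smul_sum, smul_smul, div_eq_inv_mul]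

theorem hasFDerivAt_softmax [NeZero n] (z : EuclideanSpace ℝ (Fin n)) :
    HasFDerivAt (fun z : EuclideanSpace ℝ (Fin n) => toLp 2 (softmax (ofLp z)))
      (toEuclideanCLM (𝕜 := ℝ) (softmaxJacobian (softmax (ofLp z)))) z := by
  rw [← hasFDerivWithinAt_univ, hasFDerivWithinAt_piLp]
  intro i
  have h := ((PiLp.hasFDerivAt_apply 2 z i).fun_sub (hasFDerivAt_logSumExp z)).exp
  simp only [← softmax_eq_exp_sub_log] at h
  refine h.hasFDerivWithinAt.congr_fderiv ?_
  ext v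
  simp only [_root_.smul_apply, _root_.sub_apply, PiLp.proj_apply,
    _root_.sum_apply, smul_eq_mul, ContinuousLinearMap.comp_apply,
    ofLp_toEuclideanCLM, softmaxJacobian_mulVec, dotProduct]

theorem norm_toEuclideanCLM_softmaxJacobian_le_one {ι : Type*} [Fintype ι] [DecidableEq ι]
    {p : ι → ℝ} (hp0 : ∀ i, 0 ≤ p i) (hp1 : ∀ i, p i ≤ 1) (hp : ∑ i, p i = 1) :
    ‖toEuclideanCLM (𝕜 := ℝ) (softmaxJacobian p)‖ ≤ 1 := by
  refine ContinuousLinearMap.opNorm_le_bound _ zero_le_one fun v => ?_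
  rw [one_mul, EuclideanSpace.norm_eq, EuclideanSpace.norm_eq]
  apply Real.sqrt_le_sqrt
  simpa only [ofLp_toEuclideanCLM, softmaxJacobian_mulVec, Real.norm_eq_abs, sq_abs] using sum_sq_mul_sub_dotProduct_le hp0 hp1 hp (ofLp v)

theorem lipschitzWith_softmax [NeZero n] :
    LipschitzWith 1 fun z : EuclideanSpace ℝ (Fin n) => toLp 2 (softmax (ofLp z)) := by
  rw [← lipschitzOnWith_univ]
  refine convex_univ.lipschitzOnWith_of_nnnorm_hasFDerivWithin_le
    (fun z _ => (hasFDerivAt_softmax z).hasFDerivWithinAt) fun z _ => ?_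
  rw [← NNReal.coe_le_coe, coe_nnnorm, NNReal.coe_one]
  exact norm_toEuclideanCLM_softmaxJacobian_le_one (fun i => (softmax_pos _ i).le)
    (softmax_le_one _) (sum_softmax _)

end Softmax

/-- **Softmax is 1-Lipschitz in the Euclidean norm:**
for all `x, y ∈ ℝⁿ`, `‖softmax x − softmax y‖₂ ≤ ‖x − y‖₂`. -/
theorem softmax_lipschitz_euclidean {n : ℕ} (x y : Fin n → ℝ) :
    Real.sqrt (∑ i, (softmax x i - softmax y i) ^ 2) ≤
      Real.sqrt (∑ i, (x i - y i) ^ 2) := by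
  rcases n.eq_zero_or_pos with rfl | hn
  · simp
  have : NeZero n := ⟨hn.ne'⟩
  have h := lipschitzWith_softmax.dist_le_mul (toLp 2 x) (toLp 2 y)
  simpa [EuclideanSpace.dist_eq, Real.dist_eq, sq_abs] using h
end
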